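/- arXiv:2401.03842 — 3 statements merged into one kernel-verified Lean document; each statement's English description precedes it below -/
import Mathlib

section
/- Let B have tail P(B > x) ~ ℓ(x) x^{-κ} with ℓ slowly varying and κ > 0, and let M ≥ 0 be independent of B with E[M^{κ+δ}] < ∞ for some δ > 0. Then P(M B > x) ~ E[M^κ] P(B > x) as x → ∞ (Breiman's lemma). -/
open MeasureTheory ProbabilityTheory Filter
open scoped ProbabilityTheory Topology

/-- `ℓ` is slowly varying at infinity. -/
def SlowlyVarying (ℓ : ℝ → ℝ) : Prop :=
  ∀ t > (0 : ℝ), Tendsto (fun x => ℓ (t * x) / ℓ x) atTop (𝓝 1)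

/-! Conditioning on `M` writes `P(M B > x) / P(B > x)` as `E[F(x / M) / F(x)]`, where `F` is the
tail of `B`. Regular variation of `F` gives the pointwise limit `M ^ κ`. Iterating the eventual
doubling bound `F(x / 2) ≤ 2 ^ (κ + δ) F(x)` gives the Potter-type bound
`F(x / m) ≤ K (1 + m ^ (κ + δ)) F(x)`, uniform in `m > 0` for large `x`, so the integrable
`K (1 + M ^ (κ + δ))` dominates and dominated convergence concludes. -/
def RegularlyVarying (F : ℝ → ℝ) (ρ : ℝ) : Prop :=
  ∀ t > (0 : ℝ), Tendsto (fun x => F (t * x) / F x) atTop (𝓝 (t ^ ρ))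

theorem SlowlyVarying.regularlyVarying_of_tendsto_div {ℓ F : ℝ → ℝ} {ρ : ℝ}
    (hℓ : SlowlyVarying ℓ) (hF : Tendsto (fun x => F x / (ℓ x * x ^ ρ)) atTop (𝓝 1)) :
    RegularlyVarying F ρ := by
  intro t ht
  have htx : Tendsto (fun x : ℝ => t * x) atTop atTop := tendsto_id.const_mul_atTop ht
  have hne : ∀ᶠ x in atTop, F x / (ℓ x * x ^ ρ) ≠ 0 := hF.eventually_ne one_ne_zero
  have hlim : Tendsto (fun x => F (t * x) / (ℓ (t * x) * (t * x) ^ ρ) * (ℓ (t * x) / ℓ x)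
      * t ^ ρ * (F x / (ℓ x * x ^ ρ))⁻¹) atTop (𝓝 (t ^ ρ)) := by
    simpa using (((hF.comp htx).mul (hℓ t ht)).mul_const (t ^ ρ)).mul (hF.inv₀ one_ne_zero)
  refine hlim.congr' ?_
  filter_upwards [hne, htx.eventually hne, eventually_gt_atTop 0] with x hx htx' hx0
  simp only [ne_eq, div_eq_zero_iff, mul_eq_zero, not_or] at hx htx'
  obtain ⟨hFx, hℓx, hxρ⟩ := hx
  obtain ⟨-, hℓtx, htxρ⟩ := htx'
  field_simp
  rw [Real.mul_rpow ht.le hx0.le, mul_assoc]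

theorem RegularlyVarying.tendsto_apply_div_div {F : ℝ → ℝ} {ρ : ℝ} (hF : RegularlyVarying F ρ)
    {m : ℝ} (hm : 0 < m) : Tendsto (fun x => F (x / m) / F x) atTop (𝓝 (m ^ (-ρ))) := by
  have h := hF m⁻¹ (inv_pos.2 hm)
  rw [Real.inv_rpow hm.le, ← Real.rpow_neg hm.le] at h
  simpa only [inv_mul_eq_div] using h

section Potter

variable {F : ℝ → ℝ} {x₁ p : ℝ}

theorem apply_div_two_pow_le {C : ℝ} (hx₁ : 0 ≤ x₁) (hC : 0 ≤ C)
    (hstep : ∀ x ≥ x₁, F (x / 2) ≤ C * F x) :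
    ∀ (n : ℕ) (x : ℝ), x₁ * 2 ^ n ≤ 2 * x → F (x / 2 ^ n) ≤ C ^ n * F x
  | 0, x, _ => by simp
  | n + 1, x, hx => by
    have hx' : x₁ * 2 ^ n ≤ x := by rw [pow_succ] at hx; linarith
    have hx0 : 0 ≤ x := (mul_nonneg hx₁ (by positivity)).trans hx'
    calc F (x / 2 ^ (n + 1)) = F (x / 2 ^ n / 2) := by rw [pow_succ, div_div]
      _ ≤ C * F (x / 2 ^ n) := hstep _ ((le_div_iff₀ (by positivity)).2 hx')
      _ ≤ C * (C ^ n * F x) := by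
        gcongr
        exact apply_div_two_pow_le hx₁ hC hstep n x (by linarith)
      _ = C ^ (n + 1) * F x := by ring

theorem Antitone.apply_div_le_of_halving (hF : Antitone F) (hF0 : 0 ≤ F) (hx₁ : 0 ≤ x₁)
    (hp : 0 ≤ p) (hstep : ∀ x ≥ x₁, F (x / 2) ≤ 2 ^ p * F x) {m x : ℝ} (hm : 1 ≤ m)
    (hx : x₁ * m ≤ x) : F (x / m) ≤ 2 ^ p * m ^ p * F x := by
  obtain ⟨n, hn, hn'⟩ := exists_nat_pow_near hm one_lt_two
  have hx0 : 0 ≤ x := (mul_nonneg hx₁ (by linarith)).trans hx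
  calc F (x / m) ≤ F (x / 2 ^ (n + 1)) := hF (div_le_div_of_nonneg_left hx0 (by linarith) hn'.le)
    _ ≤ (2 ^ p) ^ (n + 1) * F x :=
      apply_div_two_pow_le hx₁ (by positivity) hstep _ _ (by rw [pow_succ]; nlinarith)
    _ = 2 ^ p * ((2 : ℝ) ^ n) ^ p * F x := by
      rw [pow_succ, Real.rpow_pow_comm zero_le_two]; ring
    _ ≤ 2 ^ p * m ^ p * F x := by gcongr; exact hF0 x

theorem Antitone.apply_div_le_of_halving_of_le (hF : Antitone F) (hF0 : 0 ≤ F) (hF1 : F ≤ 1)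
    (hx₁ : 0 < x₁) (hFx₁ : 0 < F x₁) (hp : 0 ≤ p) (hstep : ∀ x ≥ x₁, F (x / 2) ≤ 2 ^ p * F x)
    {m x : ℝ} (hm : 1 ≤ m) (hx : x₁ ≤ x) : F (x / m) ≤ 2 ^ p / F x₁ * m ^ p * F x := by
  have hK : 2 ^ p ≤ 2 ^ p / F x₁ := le_div_self (by positivity) hFx₁ (hF1 x₁)
  rcases le_or_gt (x₁ * m) x with hxm | hxm
  · calc F (x / m) ≤ 2 ^ p * m ^ p * F x := hF.apply_div_le_of_halving hF0 hx₁.le hp hstep hm hxm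
      _ ≤ 2 ^ p / F x₁ * m ^ p * F x := by gcongr; exact hF0 x
  · -- Here `F ≤ 1` suffices: the Potter bound with `m = x / x₁` bounds `F x` from below.
    have hx0 : 0 < x := hx₁.trans_le hx
    have hlow : F x₁ ≤ 2 ^ p * m ^ p * F x := calc
      F x₁ = F (x / (x / x₁)) := by rw [div_div_cancel₀ hx0.ne']
      _ ≤ 2 ^ p * (x / x₁) ^ p * F x := hF.apply_div_le_of_halving hF0 hx₁.le hp hstep
        ((one_le_div hx₁).2 hx) (by rw [mul_div_cancel₀ _ hx₁.ne'])
      _ ≤ 2 ^ p * m ^ p * F x := by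
        gcongr
        · exact hF0 x
        · exact (div_le_iff₀' hx₁).2 hxm.le
    calc F (x / m) ≤ 1 := hF1 _
      _ ≤ 2 ^ p * m ^ p * F x / F x₁ := (one_le_div hFx₁).2 hlow
      _ = 2 ^ p / F x₁ * m ^ p * F x := by ring

theorem RegularlyVarying.exists_eventually_apply_div_le {ρ : ℝ} (hRV : RegularlyVarying F ρ)
    (hF : Antitone F) (hF0 : 0 ≤ F) (hF1 : F ≤ 1) (hpos : ∀ᶠ x in atTop, 0 < F x)
    (hp : 0 ≤ p) (hρp : -ρ < p) :
    ∃ K ≥ 0, ∀ᶠ x in atTop, ∀ m > 0, F (x / m) ≤ K * (1 + m ^ p) * F x := by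
  have hhalf : ∀ᶠ x in atTop, F (x / 2) / F x < 2 ^ p :=
    (hRV.tendsto_apply_div_div two_pos).eventually_lt_const
      (Real.rpow_lt_rpow_of_exponent_lt one_lt_two hρp)
  obtain ⟨a, ha⟩ := eventually_atTop.1 (hhalf.and hpos)
  set x₁ := max a 1
  have hx₁ : 0 < x₁ := zero_lt_one.trans_le (le_max_right a 1)
  have hstep : ∀ x ≥ x₁, F (x / 2) ≤ 2 ^ p * F x := fun x hx =>
    have h := ha x ((le_max_left a 1).trans hx)
    ((div_lt_iff₀ h.2).1 h.1).le
  have hFx₁ : 0 < F x₁ := (ha x₁ (le_max_left a 1)).2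
  have hK : 1 ≤ 2 ^ p / F x₁ :=
    (one_le_div hFx₁).2 ((hF1 x₁).trans (Real.one_le_rpow one_le_two hp))
  refine ⟨2 ^ p / F x₁, zero_le_one.trans hK, ?_⟩
  filter_upwards [eventually_ge_atTop x₁] with x hx m hm
  have hmp : 0 ≤ m ^ p := by positivity
  rcases le_or_gt m 1 with hm1 | hm1
  · calc F (x / m) ≤ F x := hF (le_div_self (hx₁.le.trans hx) hm hm1)
      _ = 1 * 1 * F x := by ring
      _ ≤ 2 ^ p / F x₁ * (1 + m ^ p) * F x := by gcongr; exacts [hF0 x, by linarith]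
  · calc F (x / m) ≤ 2 ^ p / F x₁ * m ^ p * F x :=
        hF.apply_div_le_of_halving_of_le hF0 hF1 hx₁ hFx₁ hp hstep hm1.le hx
      _ ≤ 2 ^ p / F x₁ * (1 + m ^ p) * F x := by gcongr; exacts [hF0 x, by linarith]

end Potter

section Independence

variable {Ω α β : Type*} [MeasurableSpace Ω] [MeasurableSpace α] [MeasurableSpace β]
  {μ : Measure Ω} {X : Ω → α} {Y : Ω → β} {s : Set (α × β)}

theorem measurable_measure_preimage_prodMk [SFinite μ] (hX : Measurable X) (hY : Measurable Y)
    (hs : MeasurableSet s) : Measurable fun ω => μ {ω' | (X ω, Y ω') ∈ s} := by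
  have h : (fun ω => μ {ω' | (X ω, Y ω') ∈ s}) = (fun a => μ.map Y (Prod.mk a ⁻¹' s)) ∘ X := by
    ext ω
    rw [Function.comp_apply, Measure.map_apply hY (measurable_prodMk_left hs)]
    rfl
  rw [h]
  exact (measurable_measure_prodMk_left hs).comp hX

theorem ProbabilityTheory.IndepFun.measure_preimage_eq_lintegral [IsFiniteMeasure μ]
    (hXY : IndepFun X Y μ) (hX : Measurable X) (hY : Measurable Y) (hs : MeasurableSet s) :
    μ {ω | (X ω, Y ω) ∈ s} = ∫⁻ ω, μ {ω' | (X ω, Y ω') ∈ s} ∂μ := by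
  have hmap := (indepFun_iff_map_prod_eq_prod_map_map hX.aemeasurable hY.aemeasurable).1 hXY
  calc μ {ω | (X ω, Y ω) ∈ s} = μ.map (fun ω => (X ω, Y ω)) s :=
        (Measure.map_apply (hX.prodMk hY) hs).symm
    _ = ∫⁻ a, μ.map Y (Prod.mk a ⁻¹' s) ∂μ.map X := by rw [hmap, Measure.prod_apply hs]
    _ = ∫⁻ ω, μ {ω' | (X ω, Y ω') ∈ s} ∂μ := by
      rw [lintegral_map (measurable_measure_prodMk_left hs) hX]
      simp only [Measure.map_apply hY (measurable_prodMk_left hs)]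
      rfl

theorem measurable_measure_lt_mul [SFinite μ] {M B : Ω → ℝ} (hM : Measurable M)
    (hB : Measurable B) (x : ℝ) : Measurable fun ω => μ {ω' | x < M ω * B ω'} :=
  measurable_measure_preimage_prodMk hM hB
    (measurableSet_lt measurable_const (measurable_fst.mul measurable_snd))

theorem ProbabilityTheory.IndepFun.toReal_measure_lt_mul_eq_integral [IsFiniteMeasure μ]
    {M B : Ω → ℝ} (hind : IndepFun M B μ) (hM : Measurable M) (hB : Measurable B) (x : ℝ) :
    (μ {ω | x < M ω * B ω}).toReal = ∫ ω, (μ {ω' | x < M ω * B ω'}).toReal ∂μ := by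
  have hlin : μ {ω | x < M ω * B ω} = ∫⁻ ω, μ {ω' | x < M ω * B ω'} ∂μ :=
    hind.measure_preimage_eq_lintegral hM hB
      (measurableSet_lt measurable_const (measurable_fst.mul measurable_snd))
  rw [hlin, integral_toReal (measurable_measure_lt_mul hM hB x).aemeasurable
    (ae_of_all _ fun _ => measure_lt_top _ _)]

end Independence

section TailProbability

variable {Ω : Type*} [MeasurableSpace Ω] {μ : Measure Ω} {B : Ω → ℝ}

theorem antitone_toReal_measure_lt [IsFiniteMeasure μ] :
    Antitone fun x => (μ {ω | x < B ω}).toReal := fun _ _ hab =>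
  ENNReal.toReal_mono (measure_ne_top _ _) (measure_mono fun _ hω => hab.trans_lt hω)

theorem measure_lt_mul_eq_of_pos {x m : ℝ} (hm : 0 < m) :
    μ {ω | x < m * B ω} = μ {ω | x / m < B ω} := by
  simp only [div_lt_iff₀' hm]

theorem measure_lt_zero_mul {x : ℝ} (hx : 0 ≤ x) : μ {ω | x < 0 * B ω} = 0 := by
  simp [hx.not_gt]

theorem tendsto_toReal_measure_lt_mul_div {κ m : ℝ}
    (hRV : RegularlyVarying (fun x => (μ {ω | x < B ω}).toReal) (-κ)) (hκ : 0 < κ) (hm : 0 ≤ m) :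
    Tendsto (fun x => (μ {ω | x < m * B ω}).toReal / (μ {ω | x < B ω}).toReal) atTop
      (𝓝 (m ^ κ)) := by
  rcases hm.eq_or_lt with rfl | hm
  · rw [Real.zero_rpow hκ.ne']
    refine tendsto_const_nhds.congr' ?_
    filter_upwards [eventually_ge_atTop 0] with x hx
    rw [measure_lt_zero_mul hx, ENNReal.toReal_zero, zero_div]
  · simpa only [measure_lt_mul_eq_of_pos hm, neg_neg] using hRV.tendsto_apply_div_div hm

theorem eventually_toReal_measure_lt_mul_div_le {K p : ℝ} (hK0 : 0 ≤ K)
    (hK : ∀ᶠ x in atTop, ∀ m > 0,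
      (μ {ω | x / m < B ω}).toReal ≤ K * (1 + m ^ p) * (μ {ω | x < B ω}).toReal)
    (hpos : ∀ᶠ x in atTop, 0 < (μ {ω | x < B ω}).toReal) :
    ∀ᶠ x in atTop, ∀ m ≥ 0,
      (μ {ω | x < m * B ω}).toReal / (μ {ω | x < B ω}).toReal ≤ K * (1 + m ^ p) := by
  filter_upwards [hK, hpos, eventually_ge_atTop 0] with x hxK hxpos hx0 m hm
  rw [div_le_iff₀ hxpos]
  rcases hm.eq_or_lt with rfl | hm
  · rw [measure_lt_zero_mul hx0, ENNReal.toReal_zero]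
    positivity
  · rw [measure_lt_mul_eq_of_pos hm]
    exact hxK m hm

end TailProbability

theorem stmt5_general {Ω : Type*} [MeasureSpace Ω] [IsProbabilityMeasure (ℙ : Measure Ω)]
    (B M : Ω → ℝ) (hBmeas : Measurable B) (hMmeas : Measurable M)
    (hMnn : ∀ ω, 0 ≤ M ω)
    (ℓ : ℝ → ℝ) (κ δ : ℝ) (hκ : 0 < κ) (hδ : 0 < δ) (hℓ : SlowlyVarying ℓ)
    (htail : Tendsto (fun x => (ℙ {ω | x < B ω}).toReal / (ℓ x * x ^ (-κ)))
      atTop (𝓝 1))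
    (hind : IndepFun M B)
    (hmom : Integrable (fun ω => M ω ^ (κ + δ))) :
    Tendsto (fun x => (ℙ {ω | x < M ω * B ω}).toReal / (ℙ {ω | x < B ω}).toReal)
      atTop (𝓝 (∫ ω, M ω ^ κ)) := by
  set F : ℝ → ℝ := fun x => (ℙ {ω | x < B ω}).toReal
  have hF0 : 0 ≤ F := fun _ => ENNReal.toReal_nonneg
  have hFpos : ∀ᶠ x in atTop, 0 < F x := (htail.eventually_ne one_ne_zero).mono fun x hx =>
    (hF0 x).lt_of_ne' (div_ne_zero_iff.1 hx).1
  have hRV : RegularlyVarying F (-κ) := hℓ.regularlyVarying_of_tendsto_div htail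
  obtain ⟨K, hK0, hK⟩ := hRV.exists_eventually_apply_div_le (p := κ + δ)
    antitone_toReal_measure_lt hF0 (fun _ => measureReal_le_one) hFpos (by linarith) (by linarith)
  have hbound := eventually_toReal_measure_lt_mul_div_le hK0 hK hFpos
  simp_rw [hind.toReal_measure_lt_mul_eq_integral hMmeas hBmeas, ← integral_div]
  refine tendsto_integral_filter_of_dominated_convergence (fun ω => K * (1 + M ω ^ (κ + δ)))
    (.of_forall fun x => ((measurable_measure_lt_mul hMmeas hBmeas x).ennreal_toReal.div_const _
      ).aestronglyMeasurable) ?_ (((integrable_const 1).add hmom).const_mul K)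
    (ae_of_all _ fun ω => tendsto_toReal_measure_lt_mul_div hRV hκ (hMnn ω))
  filter_upwards [hbound] with x hx
  refine ae_of_all _ fun ω => ?_
  rw [Real.norm_of_nonneg (div_nonneg ENNReal.toReal_nonneg (hF0 x))]
  exact hx _ (hMnn ω)

/-- Breiman's lemma: if `B ≥ 0` has tail `P(B > x) ~ ℓ(x) x^{-κ}` (`ℓ` slowly varying,
`κ > 0`) and `M ≥ 0` is independent of `B` with `E[M^{κ+δ}] < ∞` for some `δ > 0`,
then `P(M B > x) ~ E[M^κ] P(B > x)` as `x → ∞`. -/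
theorem stmt5 {Ω : Type*} [MeasureSpace Ω] [IsProbabilityMeasure (ℙ : Measure Ω)]
    (B M : Ω → ℝ) (hBmeas : Measurable B) (hMmeas : Measurable M)
    (hBnn : ∀ ω, 0 ≤ B ω) (hMnn : ∀ ω, 0 ≤ M ω)
    (ℓ : ℝ → ℝ) (κ δ : ℝ) (hκ : 0 < κ) (hδ : 0 < δ) (hℓ : SlowlyVarying ℓ)
    (htail : Tendsto (fun x => (ℙ {ω | x < B ω}).toReal / (ℓ x * x ^ (-κ)))
      atTop (𝓝 1))
    (hind : IndepFun M B)
    (hmom : Integrable (fun ω => M ω ^ (κ + δ))) :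
    Tendsto (fun x => (ℙ {ω | x < M ω * B ω}).toReal / (ℙ {ω | x < B ω}).toReal)
      atTop (𝓝 (∫ ω, M ω ^ κ)) :=
  stmt5_general B M hBmeas hMmeas hMnn ℓ κ δ hκ hδ hℓ htail hind hmom
end

section
/- Let (B_i)_{i≥0} be i.i.d. nonnegative random variables with P(B > x) ~ ℓ(x) x^{-κ}, ℓ slowly varying, κ > 0, and let μ ∈ (0,1). Then lim_{K→∞} limsup_{x→∞} P(Σ_{i=K+1}^∞ μ^i B_i > x/2) / P(B > x) = 0. -/
open MeasureTheory ProbabilityTheory Filter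
open scoped ProbabilityTheory Topology

private lemma potter_aux (F : ℝ → ℝ) (hA : Antitone F) (hFnn : ∀ x, 0 ≤ F x)
    (q x0 : ℝ) (hq0 : 0 < q) (hq1 : q < 1) (hx0 : 1 ≤ x0)
    (h : ∀ x ≥ x0, F (2 * x) ≤ q * F x) :
    ∀ x ≥ x0, ∀ t ≥ (1:ℝ), F (t * x) ≤ q⁻¹ * t ^ (Real.logb 2 q) * F x := by
  have key : ∀ n : ℕ, ∀ x ≥ x0, F (2 ^ n * x) ≤ q ^ n * F x := by
    intro n
    induction n with
    | zero => intro x hx; simp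
    | succ n ih =>
      intro x hx
      have hx1 : (0:ℝ) < x := lt_of_lt_of_le one_pos (le_trans hx0 hx)
      have h2n : x0 ≤ 2 ^ n * x := le_trans hx (le_mul_of_one_le_left hx1.le (one_le_pow₀ one_le_two))
      have := h (2 ^ n * x) h2n
      have h2 : F (2 ^ (n+1) * x) ≤ q * F (2 ^ n * x) := by
        rw [pow_succ, mul_comm (2^n) 2, mul_assoc]; exact this
      calc F (2 ^ (n+1) * x) ≤ q * F (2 ^ n * x) := h2
        _ ≤ q * (q ^ n * F x) := by exact mul_le_mul_of_nonneg_left (ih x hx) hq0.le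
        _ = q ^ (n+1) * F x := by ring
  intro x hx t ht
  have hx1 : (0:ℝ) < x := lt_of_lt_of_le one_pos (le_trans hx0 hx)
  have ht0 : (0:ℝ) < t := lt_of_lt_of_le one_pos ht
  set n : ℕ := ⌊Real.logb 2 t⌋₊ with hn
  have hlogb0 : 0 ≤ Real.logb 2 t := Real.logb_nonneg one_lt_two ht
  have h2n : (2:ℝ) ^ n ≤ t := by
    have : ((n:ℝ)) ≤ Real.logb 2 t := Nat.floor_le hlogb0
    calc (2:ℝ) ^ n = (2:ℝ) ^ ((n:ℝ)) := (Real.rpow_natCast 2 n).symm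
      _ ≤ (2:ℝ) ^ (Real.logb 2 t) := Real.rpow_le_rpow_of_exponent_le one_le_two this
      _ = t := Real.rpow_logb two_pos (by norm_num) ht0
  have step1 : F (t * x) ≤ F (2 ^ n * x) :=
    hA (mul_le_mul_of_nonneg_right h2n hx1.le)
  have step2 : F (2 ^ n * x) ≤ q ^ n * F x := key n x hx
  have step3 : q ^ n ≤ q⁻¹ * t ^ (Real.logb 2 q) := by
    have hfl : Real.logb 2 t - 1 ≤ (n:ℝ) := (Nat.sub_one_lt_floor _).le
    have : q ^ ((n:ℝ)) ≤ q ^ (Real.logb 2 t - 1) :=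
      Real.rpow_le_rpow_of_exponent_ge hq0 hq1.le hfl
    rw [Real.rpow_natCast] at this
    refine this.trans (le_of_eq ?_)
    rw [Real.rpow_sub hq0, Real.rpow_one, div_eq_mul_inv, mul_comm]
    congr 1
    rw [Real.rpow_def_of_pos hq0, Real.rpow_def_of_pos ht0, Real.logb, Real.logb]
    ring_nf
  calc F (t * x) ≤ q ^ n * F x := step1.trans step2
    _ ≤ q⁻¹ * t ^ (Real.logb 2 q) * F x := mul_le_mul_of_nonneg_right step3 (hFnn x)

private lemma ratio_limit (F ℓ : ℝ → ℝ) (κ : ℝ)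
    (hℓ : SlowlyVarying ℓ)
    (htail : Tendsto (fun x => F x / (ℓ x * x ^ (-κ))) atTop (𝓝 1)) :
    Tendsto (fun x => F (2 * x) / F x) atTop (𝓝 ((2:ℝ) ^ (-κ))) := by
  set g : ℝ → ℝ := fun x => F x / (ℓ x * x ^ (-κ)) with hg
  have hmul2 : Tendsto (fun x : ℝ => 2 * x) atTop atTop :=
    Tendsto.const_mul_atTop two_pos tendsto_id
  have h2 : Tendsto (fun x => g (2 * x)) atTop (𝓝 1) := htail.comp hmul2
  have hh := hℓ 2 two_pos
  have T : Tendsto (fun x => (g (2*x) * (ℓ (2*x) / ℓ x) * (2:ℝ) ^ (-κ)) / g x)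
      atTop (𝓝 ((1 * 1 * (2:ℝ) ^ (-κ)) / 1)) :=
    Tendsto.div ((h2.mul hh).mul tendsto_const_nhds) htail one_ne_zero
  have hev : ∀ᶠ x in atTop, (1:ℝ)/2 < g x :=
    htail.eventually (eventually_gt_nhds (by norm_num))
  have hev2 : ∀ᶠ x in atTop, (1:ℝ)/2 < g (2*x) := hmul2.eventually hev
  have heq : ∀ᶠ x in atTop,
      (g (2*x) * (ℓ (2*x) / ℓ x) * (2:ℝ) ^ (-κ)) / g x = F (2*x) / F x := by
    filter_upwards [hev, hev2, eventually_gt_atTop (0:ℝ)] with x h1 h2' hx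
    have hd1 : ℓ x * x ^ (-κ) ≠ 0 := by
      intro h; rw [hg] at h1; simp only at h1; rw [h, div_zero] at h1; linarith
    have hd2 : ℓ (2*x) * (2*x) ^ (-κ) ≠ 0 := by
      intro h; rw [hg] at h2'; simp only at h2'; rw [h, div_zero] at h2'; linarith
    have hF1 : F x ≠ 0 := by
      intro h; rw [hg] at h1; simp only at h1; rw [h, zero_div] at h1; linarith
    have hl1 : ℓ x ≠ 0 := fun h => hd1 (by rw [h, zero_mul])
    have hl2 : ℓ (2*x) ≠ 0 := fun h => hd2 (by rw [h, zero_mul])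
    have hxk : x ^ (-κ) ≠ 0 := (Real.rpow_pos_of_pos hx _).ne'
    have h2k : (2:ℝ) ^ (-κ) ≠ 0 := (Real.rpow_pos_of_pos two_pos _).ne'
    have hsplit : (2*x) ^ (-κ) = (2:ℝ) ^ (-κ) * x ^ (-κ) :=
      Real.mul_rpow (by norm_num) hx.le
    rw [hg]
    simp only
    rw [hsplit]
    field_simp
  have : Tendsto (fun x => F (2*x) / F x) atTop (𝓝 ((1 * 1 * (2:ℝ) ^ (-κ)) / 1)) :=
    Tendsto.congr' heq T
  simpa using this

private lemma pow_rpow_comm (a c : ℝ) (ha : 0 < a) (n : ℕ) :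
    (a ^ n) ^ c = (a ^ c) ^ n := by
  rw [← Real.rpow_natCast a n, ← Real.rpow_mul ha.le, mul_comm,
    Real.rpow_mul ha.le, Real.rpow_natCast]

/-- Tail negligibility of the remainder of a geometrically discounted series of i.i.d.
regularly varying terms: for i.i.d. nonnegative `(B_i)` with `P(B > x) ~ ℓ(x) x^{-κ}`
and `μ ∈ (0,1)`,
`lim_{K→∞} limsup_{x→∞} P(Σ_{i=K+1}^∞ μ^i B_i > x/2) / P(B > x) = 0`. -/
theorem stmt12 {Ω : Type*} [MeasureSpace Ω] [IsProbabilityMeasure (ℙ : Measure Ω)]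
    (B : ℕ → Ω → ℝ) (hBmeas : ∀ i, Measurable (B i)) (hBnn : ∀ i ω, 0 ≤ B i ω)
    (hiid : iIndepFun B ℙ)
    (hid : ∀ i, IdentDistrib (B i) (B 0) ℙ ℙ)
    (ℓ : ℝ → ℝ) (κ μm : ℝ) (hκ : 0 < κ) (hμ : μm ∈ Set.Ioo (0 : ℝ) 1)
    (hℓ : SlowlyVarying ℓ)
    (htail : Tendsto (fun x => (ℙ {ω | x < B 0 ω}).toReal / (ℓ x * x ^ (-κ)))
      atTop (𝓝 1)) :
    Tendsto (fun K : ℕ =>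
      limsup (fun x =>
        (ℙ {ω | x / 2 < ∑' i : ℕ, if K < i then μm ^ i * B i ω else 0}).toReal /
          (ℙ {ω | x < B 0 ω}).toReal) atTop)
      atTop (𝓝 0) := by
  obtain ⟨hμ0, hμ1⟩ := hμ
  set F : ℝ → ℝ := fun x => (ℙ {ω | x < B 0 ω}).toReal with hF
  have hFnn : ∀ x, 0 ≤ F x := fun x => ENNReal.toReal_nonneg
  have hFanti : Antitone F := by
    intro x y hxy
    exact ENNReal.toReal_mono (measure_ne_top _ _)
      (measure_mono (fun ω hω => lt_of_le_of_lt hxy hω))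
  -- the ratio limit
  have T2 : Tendsto (fun x => F (2*x) / F x) atTop (𝓝 ((2:ℝ) ^ (-κ))) :=
    ratio_limit F ℓ κ hℓ htail
  -- q
  set q : ℝ := (2:ℝ) ^ (-(κ/2)) with hq
  have hq0 : 0 < q := Real.rpow_pos_of_pos two_pos _
  have hq1 : q < 1 := Real.rpow_lt_one_of_one_lt_of_neg one_lt_two (by linarith)
  have hlt : (2:ℝ) ^ (-κ) < q :=
    Real.rpow_lt_rpow_of_exponent_lt one_lt_two (by linarith)
  -- eventually F x > 0
  have hFpos : ∀ᶠ x in atTop, 0 < F x := by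
    have hev : ∀ᶠ x in atTop, (1:ℝ)/2 < F x / (ℓ x * x ^ (-κ)) :=
      htail.eventually (eventually_gt_nhds (by norm_num))
    filter_upwards [hev] with x h1
    rcases lt_or_eq_of_le (hFnn x) with h | h
    · exact h
    · exfalso; rw [← h, zero_div] at h1; linarith
  have hq_ev : ∀ᶠ x in atTop, F (2*x) ≤ q * F x := by
    have := T2.eventually (eventually_lt_nhds hlt)
    filter_upwards [this, hFpos] with x h1 h2
    have := (div_lt_iff₀ h2).mp h1
    linarith
  obtain ⟨X1, hX1⟩ := (hq_ev.and hFpos).exists_forall_of_atTop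
  set x0 : ℝ := max X1 1 with hx0def
  have hx0one : (1:ℝ) ≤ x0 := le_max_right _ _
  have hdoub : ∀ x ≥ x0, F (2 * x) ≤ q * F x :=
    fun x hx => (hX1 x (le_trans (le_max_left _ _) hx)).1
  have hFpos' : ∀ x ≥ x0, 0 < F x :=
    fun x hx => (hX1 x (le_trans (le_max_left _ _) hx)).2
  have hpotter := potter_aux F hFanti hFnn q x0 hq0 hq1 hx0one hdoub
  have hlogbq : Real.logb 2 q = -(κ/2) := Real.logb_rpow two_pos (by norm_num)
  rw [hlogbq] at hpotter
  set C : ℝ := q⁻¹ with hC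
  have hC0 : 0 < C := inv_pos.mpr hq0
  -- constants
  set r : ℝ := (1 + μm)/2 with hr
  have hr0 : 0 < r := by positivity
  have hrμ : μm < r := by simp only [hr]; linarith
  have hr1 : r < 1 := by simp only [hr]; linarith
  set d : ℝ := (1 - r)/2 with hd
  have hd0 : 0 < d := by simp only [hd]; linarith
  set a : ℝ := r / μm with ha
  have ha1 : 1 < a := (one_lt_div hμ0).mpr hrμ
  have ha0 : 0 < a := lt_trans one_pos ha1
  set ρ : ℝ := a ^ (-(κ/2)) with hρ
  have hρ0 : 0 < ρ := Real.rpow_pos_of_pos ha0 _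
  have hρ1 : ρ < 1 := Real.rpow_lt_one_of_one_lt_of_neg ha1 (by linarith)
  set dγ : ℝ := d ^ (-(κ/2)) with hdγ
  have hdγ0 : 0 < dγ := Real.rpow_pos_of_pos hd0 _
  set bc : ℝ := C * dγ * (1 - ρ)⁻¹ with hbc
  have hbc0 : 0 < bc := by
    apply mul_pos (mul_pos hC0 hdγ0)
    rw [inv_pos]; linarith
  -- identical tails
  have hidt : ∀ (i : ℕ) (y : ℝ), ℙ {ω | y < B i ω} = ℙ {ω | y < B 0 ω} := by
    intro i y
    exact (hid i).measure_mem_eq (measurableSet_Ioi (a := y))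
  -- main per-K bound
  have main : ∀ K : ℕ, 1 ≤ d * a ^ (K+1) → ∀ x, x0 ≤ x →
      (ℙ {ω | x / 2 < ∑' i : ℕ, if K < i then μm ^ i * B i ω else 0}).toReal / F x
        ≤ bc * ρ ^ (K+1) := by
    intro K hK x hx
    have hx1 : (1:ℝ) ≤ x := le_trans hx0one hx
    have hxpos : (0:ℝ) < x := lt_of_lt_of_le one_pos hx1
    -- thresholds
    set t : ℕ → ℝ := fun j => d * r ^ j / μm ^ (K+1+j) with htdef
    have htlb : ∀ j, d * a ^ (K+1+j) ≤ t j := by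
      intro j
      have h1 : r ^ (K+1+j) ≤ r ^ j := by
        apply pow_le_pow_of_le_one hr0.le hr1.le; omega
      have h2 : a ^ (K+1+j) = r ^ (K+1+j) / μm ^ (K+1+j) := div_pow r μm _
      rw [h2, htdef]
      simp only
      rw [← mul_div_assoc]
      gcongr
    have hta1 : ∀ j, (1:ℝ) ≤ d * a ^ (K+1+j) := by
      intro j
      refine le_trans hK ?_
      apply mul_le_mul_of_nonneg_left _ hd0.le
      apply pow_le_pow_right₀ ha1.le; omega
    have ht1 : ∀ j, (1:ℝ) ≤ t j := fun j => le_trans (hta1 j) (htlb j)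
    -- events
    set A : ℕ → Set Ω := fun j => {ω | d * r ^ j * x < μm ^ (K+1+j) * B (K+1+j) ω} with hA
    -- inclusion
    have hincl : {ω | x / 2 < ∑' i : ℕ, if K < i then μm ^ i * B i ω else 0} ⊆ ⋃ j, A j := by
      intro ω hω
      by_contra hnot
      simp only [Set.mem_iUnion, hA, Set.mem_setOf_eq, not_exists, not_lt] at hnot
      set f : ℕ → ℝ := fun i => if K < i then μm ^ i * B i ω else 0 with hfdef
      set g : ℕ → ℝ := fun i => if K < i then d * r ^ (i - (K+1)) * x else 0 with hgdef
      have hfnn : ∀ i, 0 ≤ f i := by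
        intro i; rw [hfdef]; simp only
        split
        · exact mul_nonneg (pow_nonneg hμ0.le _) (hBnn _ _)
        · exact le_rfl
      have hgnn : ∀ i, 0 ≤ g i := by
        intro i; rw [hgdef]; simp only
        split
        · positivity
        · exact le_rfl
      have hfg : ∀ i, f i ≤ g i := by
        intro i
        rw [hfdef, hgdef]; simp only
        split
        · rename_i hKi
          have := hnot (i - (K+1))
          rw [show K + 1 + (i - (K+1)) = i from by omega] at this
          exact this
        · exact le_rfl
      have hgsum : Summable g := by
        apply Summable.of_nonneg_of_le hgnn (g := g)
          (f := fun i => (d * x / r ^ (K+1)) * r ^ i)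
        · intro i
          rw [hgdef]; simp only
          split
          · rename_i hKi
            have : r ^ (i - (K+1)) = r ^ i * (r ^ (K+1))⁻¹ :=
              pow_sub₀ r hr0.ne' (by omega)
            rw [this]
            rw [div_mul_eq_mul_div, div_eq_mul_inv]
            exact le_of_eq (by ring)
          · positivity
        · exact (summable_geometric_of_lt_one hr0.le hr1).mul_left _
      have hgsum_val : ∑' i, g i = x / 2 := by
        have hinj : Function.Injective (fun j : ℕ => K + 1 + j) := fun a b h => by
          simp only at h; omega
        have hsupp : Function.support g ⊆ Set.range (fun j : ℕ => K + 1 + j) := by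
          intro i hi
          rw [hgdef] at hi
          simp only [Function.mem_support] at hi
          by_cases hKi : K < i
          · exact ⟨i - (K+1), by show K + 1 + (i - (K+1)) = i; omega⟩
          · simp [hKi] at hi
        have := hinj.tsum_eq hsupp
        rw [← this]
        have heq : ∀ j : ℕ, g (K + 1 + j) = (d * x) * r ^ j := by
          intro j
          rw [hgdef]; simp only
          rw [if_pos (by omega), show K + 1 + j - (K+1) = j from by omega]
          ring
        rw [tsum_congr heq, tsum_mul_left, tsum_geometric_of_lt_one hr0.le hr1]
        have h1r : (1:ℝ) - r ≠ 0 := by linarith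
        have h1m : (1:ℝ) - μm ≠ 0 := by linarith
        rw [hd]
        field_simp
      have hlt2 : x / 2 < ∑' i, f i := hω
      by_cases hs : Summable f
      · have hle2 := Summable.tsum_le_tsum hfg hs hgsum
        rw [hgsum_val] at hle2
        linarith
      · rw [tsum_eq_zero_of_not_summable hs] at hlt2
        linarith
    -- measure bound
    have hAeq : ∀ j, ℙ (A j) = ENNReal.ofReal (F (t j * x)) := by
      intro j
      have hp : (0:ℝ) < μm ^ (K+1+j) := pow_pos hμ0 _
      have he : t j * x * μm ^ (K+1+j) = d * r ^ j * x := by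
        have htj : t j = d * r ^ j / μm ^ (K+1+j) := rfl
        rw [htj]; field_simp
      have hiff : ∀ ω, d * r ^ j * x < μm ^ (K+1+j) * B (K+1+j) ω ↔
          t j * x < B (K+1+j) ω := by
        intro ω
        constructor
        · intro h
          by_contra hc
          push_neg at hc
          linarith [mul_le_mul_of_nonneg_right hc hp.le, he]
        · intro h
          linarith [mul_lt_mul_of_pos_right h hp, he]
      have hAeq' : A j = {ω | t j * x < B (K+1+j) ω} := Set.ext (fun ω => hiff ω)
      rw [hAeq', hidt (K+1+j) (t j * x), hF]
      exact (ENNReal.ofReal_toReal (measure_ne_top _ _)).symm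
    have hAbd : ∀ j, ℙ (A j) ≤ ENNReal.ofReal ((C * dγ * ρ ^ (K+1) * F x) * ρ ^ j) := by
      intro j
      rw [hAeq j]
      apply ENNReal.ofReal_le_ofReal
      have h1 : F (t j * x) ≤ C * (t j) ^ (-(κ/2)) * F x := hpotter x hx (t j) (ht1 j)
      have h2 : (t j) ^ (-(κ/2)) ≤ (d * a ^ (K+1+j)) ^ (-(κ/2)) := by
        apply Real.rpow_le_rpow_of_nonpos (by positivity) (htlb j) (by linarith)
      have h3 : (d * a ^ (K+1+j) : ℝ) ^ (-(κ/2)) = dγ * ρ ^ (K+1+j) := by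
        rw [Real.mul_rpow hd0.le (by positivity), hdγ, hρ,
          pow_rpow_comm a (-(κ/2)) ha0]
      calc F (t j * x) ≤ C * (t j) ^ (-(κ/2)) * F x := h1
        _ ≤ C * ((d * a ^ (K+1+j)) ^ (-(κ/2))) * F x := by
            apply mul_le_mul_of_nonneg_right _ (hFnn x)
            exact mul_le_mul_of_nonneg_left h2 hC0.le
        _ = (C * dγ * ρ ^ (K+1) * F x) * ρ ^ j := by
            rw [h3, pow_add]; ring
    have hsummu : Summable (fun j : ℕ => (C * dγ * ρ ^ (K+1) * F x) * ρ ^ j) :=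
      (summable_geometric_of_lt_one hρ0.le hρ1).mul_left _
    have hmeas : ℙ {ω | x / 2 < ∑' i : ℕ, if K < i then μm ^ i * B i ω else 0}
        ≤ ENNReal.ofReal ((bc * ρ ^ (K+1)) * F x) := by
      calc ℙ {ω | x / 2 < ∑' i : ℕ, if K < i then μm ^ i * B i ω else 0}
          ≤ ℙ (⋃ j, A j) := measure_mono hincl
        _ ≤ ∑' j, ℙ (A j) := measure_iUnion_le _
        _ ≤ ∑' j, ENNReal.ofReal ((C * dγ * ρ ^ (K+1) * F x) * ρ ^ j) :=
            ENNReal.tsum_le_tsum hAbd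
        _ = ENNReal.ofReal (∑' j, (C * dγ * ρ ^ (K+1) * F x) * ρ ^ j) :=
            (ENNReal.ofReal_tsum_of_nonneg (fun j => by positivity) hsummu).symm
        _ = ENNReal.ofReal ((bc * ρ ^ (K+1)) * F x) := by
            congr 1
            rw [tsum_mul_left, tsum_geometric_of_lt_one hρ0.le hρ1, hbc]
            ring
    have hN : (ℙ {ω | x / 2 < ∑' i : ℕ, if K < i then μm ^ i * B i ω else 0}).toReal
        ≤ (bc * ρ ^ (K+1)) * F x :=
      ENNReal.toReal_le_of_le_ofReal (by positivity) hmeas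
    rw [div_le_iff₀ (hFpos' x hx)]
    exact hN
  -- eventual-K condition
  have hKev : ∀ᶠ K : ℕ in atTop, 1 ≤ d * a ^ (K+1) := by
    have h := tendsto_pow_atTop_atTop_of_one_lt ha1
    have h2 : Tendsto (fun K : ℕ => d * a ^ (K+1)) atTop atTop := by
      apply Tendsto.const_mul_atTop hd0
      exact h.comp (tendsto_add_atTop_nat 1)
    exact h2.eventually_ge_atTop 1
  -- nonnegativity of ratio
  have hratnn : ∀ K : ℕ, ∀ x : ℝ,
      0 ≤ (ℙ {ω | x / 2 < ∑' i : ℕ, if K < i then μm ^ i * B i ω else 0}).toReal / F x :=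
    fun K x => div_nonneg ENNReal.toReal_nonneg (hFnn x)
  -- squeeze
  have hup : ∀ᶠ K : ℕ in atTop,
      limsup (fun x =>
        (ℙ {ω | x / 2 < ∑' i : ℕ, if K < i then μm ^ i * B i ω else 0}).toReal / F x)
        atTop ≤ bc * ρ ^ (K+1) := by
    filter_upwards [hKev] with K hK
    apply limsup_le_of_le
    · exact isCoboundedUnder_le_of_eventually_le atTop (x := 0)
        (Eventually.of_forall (fun x => hratnn K x))
    · filter_upwards [eventually_ge_atTop x0] with x hx
      exact main K hK x hx
  have hlo : ∀ᶠ K : ℕ in atTop,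
      0 ≤ limsup (fun x =>
        (ℙ {ω | x / 2 < ∑' i : ℕ, if K < i then μm ^ i * B i ω else 0}).toReal / F x)
        atTop := by
    filter_upwards [hKev] with K hK
    apply le_limsup_of_frequently_le
    · exact Frequently.of_forall (fun x => hratnn K x)
    · apply isBoundedUnder_of_eventually_le (a := bc * ρ ^ (K+1))
      filter_upwards [eventually_ge_atTop x0] with x hx
      exact main K hK x hx
  have hb : Tendsto (fun K : ℕ => bc * ρ ^ (K+1)) atTop (𝓝 0) := by
    have h1 : Tendsto (fun K : ℕ => ρ ^ K) atTop (𝓝 0) :=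
      tendsto_pow_atTop_nhds_zero_of_lt_one hρ0.le hρ1
    have h2 : Tendsto (fun K : ℕ => (bc * ρ) * ρ ^ K) atTop (𝓝 ((bc * ρ) * 0)) :=
      h1.const_mul _
    rw [mul_zero] at h2
    refine h2.congr (fun K => by rw [pow_succ]; ring)
  exact tendsto_of_tendsto_of_tendsto_of_le_of_le' tendsto_const_nhds hb hlo hup
end

section
/- Let B, B' be i.i.d. nonnegative random variables with regularly varying tail of index −κ (κ > 0), and let M, M' be nonnegative random variables independent of (B, B') with E[M^{κ+δ}] + E[M'^{κ+δ}] < ∞ for some δ > 0. Then P(M B > x, M' B' > x) = o(P(B > x)) as x → ∞. -/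
/-!
Write `F x = P(B > x)`. Regular variation at the single scale `2` already gives Potter-type
bounds `x ^ (-γ) ≲ F x ≲ x ^ (-β)` for `β < κ < γ` (compare `F` with a power along dyadic
scales), and Markov's inequality gives `P(M ≥ y) ≲ y ^ (-(κ + δ))`.

Cut the range of `M` at the levels `x ^ (k * h)`, `k < n`. If `M B > x` and `M' B' > x`, then
either a multiplier exceeds `x ^ (n * h)`, or for some `k` we have `M ≥ x ^ (k * h)`,
`B > x ^ (1 - (k + 1) * h)` and `B' > x ^ (1 - n * h)`. By independence each such event has
probability `O(x ^ (-(k * h * (κ + δ) + (2 - h - n * h - k * h) * β)))`, and with `n * h` close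
to `1`, `h` small and `β`, `γ` close to `κ` every exponent exceeds `γ`; hence each of the finitely
many pieces is `o(F x)`.
-/

open MeasureTheory ProbabilityTheory Filter Asymptotics Set
open scoped ProbabilityTheory Topology

lemma le_of_two_mul_le_of_le_on_Icc {g : ℝ → ℝ} {x₀ C : ℝ} (hx₀ : 0 < x₀)
    (hstep : ∀ x ≥ x₀, g (2 * x) ≤ g x) (hbase : ∀ x ∈ Icc x₀ (2 * x₀), g x ≤ C) :
    ∀ x ≥ x₀, g x ≤ C := by
  have hdyadic : ∀ n : ℕ, ∀ x ∈ Icc x₀ (2 ^ (n + 1) * x₀), g x ≤ C := by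
    intro n
    induction n with
    | zero => simpa using hbase
    | succ n ih =>
      rintro x ⟨hx₀x, hx⟩
      rcases le_or_gt x (2 * x₀) with hx' | hx'
      · exact hbase x ⟨hx₀x, hx'⟩
      · have hhalf : x / 2 ∈ Icc x₀ (2 ^ (n + 1) * x₀) :=
          ⟨by linarith, by rw [pow_succ] at hx; linarith⟩
        calc g x = g (2 * (x / 2)) := by ring_nf
          _ ≤ g (x / 2) := hstep _ hhalf.1
          _ ≤ C := ih _ hhalf
  intro x hx
  obtain ⟨n, hn⟩ := pow_unbounded_of_one_lt (x / x₀) one_lt_two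
  refine hdyadic n x ⟨hx, ?_⟩
  rw [div_lt_iff₀ hx₀] at hn
  rw [pow_succ]
  nlinarith [pow_pos (two_pos : (0 : ℝ) < 2) n]

lemma isBigO_of_two_mul_le {u v : ℝ → ℝ} {x₀ C : ℝ} (hx₀ : 0 < x₀)
    (hu : ∀ x ≥ x₀, 0 ≤ u x) (hv : ∀ x ≥ x₀, 0 < v x)
    (hstep : ∀ x ≥ x₀, u (2 * x) * v x ≤ u x * v (2 * x))
    (hbase : ∀ x ∈ Icc x₀ (2 * x₀), u x ≤ C * v x) :
    u =O[atTop] v := by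
  have hratio : ∀ x ≥ x₀, u x / v x ≤ C := by
    refine le_of_two_mul_le_of_le_on_Icc hx₀ (fun x hx => ?_) (fun x hx => ?_)
    · rw [div_le_div_iff₀ (hv _ (by linarith)) (hv x hx)]
      exact hstep x hx
    · exact (div_le_iff₀ (hv x hx.1)).2 (hbase x hx)
  refine IsBigO.of_bound C ?_
  filter_upwards [eventually_ge_atTop x₀] with x hx
  rw [Real.norm_of_nonneg (hu x hx), Real.norm_of_nonneg (hv x hx).le]
  exact (div_le_iff₀ (hv x hx)).1 (hratio x hx)

lemma isBigO_rpow_neg_of_tendsto_div {G : ℝ → ℝ} {κ β : ℝ} (hG : Antitone G)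
    (hG₀ : ∀ x, 0 < G x)
    (hlim : Tendsto (fun x => G (2 * x) / G x) atTop (𝓝 (2 ^ (-κ))))
    (hβ : 0 ≤ β) (hβκ : β < κ) :
    G =O[atTop] fun x => x ^ (-β) := by
  have hq : (2 : ℝ) ^ (-κ) < 2 ^ (-β) :=
    Real.rpow_lt_rpow_of_exponent_lt one_lt_two (neg_lt_neg hβκ)
  obtain ⟨x₁, hx₁⟩ := eventually_atTop.1 (hlim.eventually_lt_const hq)
  set x₀ := max x₁ 1
  have hx₀ : 0 < x₀ := lt_max_of_lt_right one_pos
  refine isBigO_of_two_mul_le hx₀ (C := G x₀ / (2 * x₀) ^ (-β)) (fun x _ => (hG₀ x).le)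
    (fun x hx => Real.rpow_pos_of_pos (by linarith) _) (fun x hx => ?_) (fun x hx => ?_)
  · have hx0 : 0 < x := by linarith
    have hdecay : G (2 * x) ≤ 2 ^ (-β) * G x :=
      ((div_lt_iff₀ (hG₀ x)).1 (hx₁ x (le_trans (le_max_left _ _) hx))).le
    rw [Real.mul_rpow zero_le_two hx0.le]
    have := Real.rpow_pos_of_pos hx0 (-β)
    nlinarith
  · have hx0 : 0 < x := by linarith [hx.1]
    calc G x ≤ G x₀ := hG hx.1
      _ = G x₀ / (2 * x₀) ^ (-β) * (2 * x₀) ^ (-β) := by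
        rw [div_mul_cancel₀ _ (Real.rpow_pos_of_pos (by linarith) _).ne']
      _ ≤ G x₀ / (2 * x₀) ^ (-β) * x ^ (-β) :=
        mul_le_mul_of_nonneg_left (Real.rpow_le_rpow_of_nonpos hx0 hx.2 (neg_nonpos.2 hβ))
          (div_nonneg (hG₀ _).le (Real.rpow_nonneg (by linarith) _))

lemma rpow_neg_isBigO_of_tendsto_div {G : ℝ → ℝ} {κ γ : ℝ} (hG : Antitone G)
    (hG₀ : ∀ x, 0 < G x)
    (hlim : Tendsto (fun x => G (2 * x) / G x) atTop (𝓝 (2 ^ (-κ))))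
    (hγ : 0 ≤ γ) (hκγ : κ < γ) :
    (fun x => x ^ (-γ)) =O[atTop] G := by
  have hq : (2 : ℝ) ^ (-γ) < 2 ^ (-κ) :=
    Real.rpow_lt_rpow_of_exponent_lt one_lt_two (neg_lt_neg hκγ)
  obtain ⟨x₁, hx₁⟩ := eventually_atTop.1 (hlim.eventually_const_lt hq)
  set x₀ := max x₁ 1
  have hx₀ : 0 < x₀ := lt_max_of_lt_right one_pos
  refine isBigO_of_two_mul_le hx₀ (C := x₀ ^ (-γ) / G (2 * x₀))
    (fun x hx => Real.rpow_nonneg (by linarith) _) (fun x _ => hG₀ x) (fun x hx => ?_)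
    (fun x hx => ?_)
  · have hx0 : 0 < x := by linarith
    have hdecay : 2 ^ (-γ) * G x ≤ G (2 * x) :=
      ((lt_div_iff₀ (hG₀ x)).1 (hx₁ x (le_trans (le_max_left _ _) hx))).le
    rw [Real.mul_rpow zero_le_two hx0.le]
    have := Real.rpow_pos_of_pos hx0 (-γ)
    nlinarith
  · calc x ^ (-γ) ≤ x₀ ^ (-γ) := Real.rpow_le_rpow_of_nonpos hx₀ hx.1 (neg_nonpos.2 hγ)
      _ = x₀ ^ (-γ) / G (2 * x₀) * G (2 * x₀) := by rw [div_mul_cancel₀ _ (hG₀ _).ne']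
      _ ≤ x₀ ^ (-γ) / G (2 * x₀) * G x :=
        mul_le_mul_of_nonneg_left (hG hx.2) (div_nonneg (Real.rpow_nonneg hx₀.le _) (hG₀ _).le)

lemma isBigO_comp_rpow {G : ℝ → ℝ} {β c : ℝ} (hG : G =O[atTop] fun y => y ^ (-β))
    (hc : 0 < c) : (fun x => G (x ^ c)) =O[atTop] fun x => x ^ (-(c * β)) := by
  refine (hG.comp_tendsto (tendsto_rpow_atTop hc)).congr' EventuallyEq.rfl ?_
  filter_upwards [eventually_gt_atTop 0] with x hx
  simp only [Function.comp_apply, ← Real.rpow_mul hx.le, mul_neg]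

lemma isBigO_mul_rpow_neg {f g : ℝ → ℝ} {s t : ℝ} (hf : f =O[atTop] fun x => x ^ (-s))
    (hg : g =O[atTop] fun x => x ^ (-t)) :
    (fun x => f x * g x) =O[atTop] fun x => x ^ (-(s + t)) := by
  refine (hf.mul hg).congr' EventuallyEq.rfl ?_
  filter_upwards [eventually_gt_atTop 0] with x hx
  rw [← Real.rpow_add hx, neg_add]

lemma isLittleO_of_isBigO_rpow_neg {f F : ℝ → ℝ} {s γ : ℝ}
    (hf : f =O[atTop] fun x => x ^ (-s)) (hF : (fun x => x ^ (-γ)) =O[atTop] F)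
    (hγs : γ < s) : f =o[atTop] F := by
  have hpow : (fun x : ℝ => x ^ (-s)) =o[atTop] fun x => x ^ (-γ) := by
    refine (((isLittleO_one_iff ℝ).2 (tendsto_rpow_neg_atTop (sub_pos.2 hγs))).mul_isBigO
      (isBigO_refl (fun x : ℝ => x ^ (-γ)) atTop)).congr' ?_ (by simp)
    filter_upwards [eventually_gt_atTop 0] with x hx
    rw [← Real.rpow_add hx]
    ring_nf
  exact hf.trans_isLittleO (hpow.trans_isBigO hF)

lemma measureReal_le_max_one_le {Ω : Type*} [MeasurableSpace Ω] {μ : Measure Ω}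
    [IsProbabilityMeasure μ] {K : Ω → ℝ} {p : ℝ} (hK : ∀ ω, 0 ≤ K ω) (hp : 0 < p)
    (hint : Integrable (fun ω => K ω ^ p) μ) {y : ℝ} (hy : 0 < y) :
    μ.real {ω | y ≤ max (K ω) 1} ≤ (∫ ω, K ω ^ p ∂μ + 1) * y ^ (-p) := by
  have hint₀ : 0 ≤ ∫ ω, K ω ^ p ∂μ := integral_nonneg fun ω => Real.rpow_nonneg (hK ω) p
  rcases le_or_gt y 1 with hy1 | hy1
  · have hpow : 1 ≤ y ^ (-p) := Real.one_le_rpow_of_pos_of_le_one_of_nonpos hy hy1 (by linarith)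
    calc μ.real {ω | y ≤ max (K ω) 1} ≤ 1 := measureReal_le_one
      _ ≤ (∫ ω, K ω ^ p ∂μ + 1) * y ^ (-p) := by nlinarith
  · have hsub : {ω | y ≤ max (K ω) 1} ⊆ {ω | y ^ p ≤ K ω ^ p} := fun ω hω =>
      Real.rpow_le_rpow hy.le ((le_max_iff.1 hω).resolve_right (by linarith)) hp.le
    have hmarkov := mul_meas_ge_le_integral_of_nonneg
      (ae_of_all _ fun ω => Real.rpow_nonneg (hK ω) p) hint (y ^ p)
    have hyp : 0 < y ^ p := Real.rpow_pos_of_pos hy p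
    calc μ.real {ω | y ≤ max (K ω) 1} ≤ μ.real {ω | y ^ p ≤ K ω ^ p} := measureReal_mono hsub
      _ ≤ (∫ ω, K ω ^ p ∂μ) * y ^ (-p) := by
        rw [Real.rpow_neg hy.le, ← div_eq_mul_inv, le_div_iff₀ hyp, mul_comm]
        exact hmarkov
      _ ≤ (∫ ω, K ω ^ p ∂μ + 1) * y ^ (-p) := by
        gcongr
        linarith

lemma isBigO_measureReal_rpow_le_max_one {Ω : Type*} [MeasurableSpace Ω] {μ : Measure Ω}
    [IsProbabilityMeasure μ] {K : Ω → ℝ} {p : ℝ} (hK : ∀ ω, 0 ≤ K ω) (hp : 0 < p)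
    (hint : Integrable (fun ω => K ω ^ p) μ) (c : ℝ) :
    (fun x : ℝ => μ.real {ω | x ^ c ≤ max (K ω) 1}) =O[atTop] fun x => x ^ (-(c * p)) := by
  refine IsBigO.of_bound (∫ ω, K ω ^ p ∂μ + 1) ?_
  filter_upwards [eventually_gt_atTop 0] with x hx
  rw [Real.norm_of_nonneg measureReal_nonneg, Real.norm_of_nonneg (Real.rpow_nonneg hx.le _),
    ← mul_neg, Real.rpow_mul hx.le]
  exact measureReal_le_max_one_le hK hp hint (Real.rpow_pos_of_pos hx c)

lemma measureReal_inter_inter_eq_mul_mul {Ω α β γ : Type*} [MeasurableSpace Ω]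
    [MeasurableSpace α] [MeasurableSpace β] [MeasurableSpace γ] {μ : Measure Ω}
    {K : Ω → α} {X : Ω → β} {Y : Ω → γ} (hK : IndepFun K (fun ω => (X ω, Y ω)) μ)
    (hXY : IndepFun X Y μ) {S : Set α} {T : Set β} {U : Set γ} (hS : MeasurableSet S)
    (hT : MeasurableSet T) (hU : MeasurableSet U) :
    μ.real (K ⁻¹' S ∩ (X ⁻¹' T ∩ Y ⁻¹' U)) =
      μ.real (K ⁻¹' S) * μ.real (X ⁻¹' T) * μ.real (Y ⁻¹' U) := by
  have hpair : X ⁻¹' T ∩ Y ⁻¹' U = (fun ω => (X ω, Y ω)) ⁻¹' (T ×ˢ U) := rfl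
  rw [hpair, measureReal_def, hK.measure_inter_preimage_eq_mul _ _ hS (hT.prod hU), ← hpair,
    hXY.measure_inter_preimage_eq_mul _ _ hT hU]
  simp only [ENNReal.toReal_mul, measureReal_def, mul_assoc]

lemma rpow_one_sub_lt {x s m b : ℝ} (hx : 0 < x) (hb : 0 ≤ b) (hm : m ≤ x ^ s)
    (hmb : x < m * b) : x ^ (1 - s) < b := by
  rw [Real.rpow_sub hx, Real.rpow_one, div_lt_iff₀ (Real.rpow_pos_of_pos hx s)]
  nlinarith

-- With `max m 1` the bottom level `k = 0` is always reached, also when `m < 1`.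
lemma exists_grid_of_lt_mul {x h m m' b b' : ℝ} {n : ℕ} (hx : 1 < x) (hn : 0 < n)
    (hb : 0 ≤ b) (hb' : 0 ≤ b') (hmb : x < m * b) (hmb' : x < m' * b') :
    x ^ (n * h) ≤ max m 1 ∨ x ^ (n * h) ≤ max m' 1 ∨
      ∃ k < n, x ^ (k * h) ≤ max m 1 ∧ x ^ (1 - (k + 1) * h) < b ∧ x ^ (1 - n * h) < b' := by
  classical
  have hx₀ : 0 < x := by linarith
  by_contra! hcon
  obtain ⟨hm, hm', hgrid⟩ := hcon
  have hlast : m ≤ x ^ ((n - 1 + 1 : ℕ) * h) := by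
    rw [Nat.sub_add_cancel hn]; exact (le_max_left m 1).trans hm.le
  have hex : ∃ k, m ≤ x ^ ((k + 1 : ℕ) * h) := ⟨n - 1, hlast⟩
  set k := Nat.find hex
  have hkn : k < n := (Nat.find_min' hex hlast).trans_lt (by omega)
  have hb'x : x ^ (1 - n * h) < b' :=
    rpow_one_sub_lt hx₀ hb' ((le_max_left m' 1).trans hm'.le) hmb'
  refine absurd hb'x (not_lt.2 (hgrid k hkn ?_ ?_))
  · rcases Nat.eq_zero_or_pos k with hk | hk
    · rw [hk, Nat.cast_zero, zero_mul, Real.rpow_zero]; exact le_max_right _ _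
    · have := Nat.find_min hex (m := k - 1) (by omega)
      rw [Nat.sub_add_cancel hk] at this
      exact le_max_of_le_left (not_le.1 this).le
  · exact rpow_one_sub_lt hx₀ hb (by exact_mod_cast Nat.find_spec hex) hmb

lemma measureReal_lt_mul_and_lt_mul_le {Ω : Type*} [MeasurableSpace Ω] {μ : Measure Ω}
    [IsFiniteMeasure μ] {B B' M M' : Ω → ℝ} (hBnn : ∀ ω, 0 ≤ B ω) (hB'nn : ∀ ω, 0 ≤ B' ω)
    (hBB'ind : IndepFun B B' μ) (hBB'id : IdentDistrib B' B μ μ)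
    (hind : IndepFun (fun ω => (M ω, M' ω)) (fun ω => (B ω, B' ω)) μ)
    {n : ℕ} (hn : 0 < n) (h : ℝ) {x : ℝ} (hx : 1 < x) :
    μ.real {ω | x < M ω * B ω ∧ x < M' ω * B' ω} ≤
      μ.real {ω | x ^ (n * h) ≤ max (M ω) 1} + μ.real {ω | x ^ (n * h) ≤ max (M' ω) 1} +
      ∑ k ∈ Finset.range n, μ.real {ω | x ^ (k * h) ≤ max (M ω) 1} *
        μ.real {ω | x ^ (1 - (k + 1) * h) < B ω} * μ.real {ω | x ^ (1 - n * h) < B ω} := by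
  have hK : IndepFun (fun ω => max (M ω) 1) (fun ω => (B ω, B' ω)) μ :=
    hind.comp (measurable_fst.max measurable_const) measurable_id
  have hB' : ∀ y, μ.real {ω | y < B' ω} = μ.real {ω | y < B ω} := fun y =>
    congrArg ENNReal.toReal (hBB'id.measure_mem_eq measurableSet_Ioi)
  have hcover : {ω | x < M ω * B ω ∧ x < M' ω * B' ω} ⊆
      {ω | x ^ (n * h) ≤ max (M ω) 1} ∪ {ω | x ^ (n * h) ≤ max (M' ω) 1} ∪
        ⋃ k ∈ Finset.range n, {ω | x ^ (k * h) ≤ max (M ω) 1 ∧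
          x ^ (1 - (k + 1) * h) < B ω ∧ x ^ (1 - n * h) < B' ω} := by
    rintro ω ⟨hMB, hMB'⟩
    rcases exists_grid_of_lt_mul hx hn (hBnn ω) (hB'nn ω) hMB hMB' with hA | hA' | ⟨k, hk, hC⟩
    · exact Or.inl (Or.inl hA)
    · exact Or.inl (Or.inr hA')
    · exact Or.inr (mem_biUnion (Finset.mem_range.2 hk) hC)
  refine (measureReal_mono hcover).trans <| (measureReal_union_le _ _).trans <|
    add_le_add (measureReal_union_le _ _) ((measureReal_biUnion_finset_le _ _).trans_eq ?_)
  refine Finset.sum_congr rfl fun k _ => ?_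
  rw [← hB' (x ^ (1 - n * h))]
  exact measureReal_inter_inter_eq_mul_mul hK hBB'ind measurableSet_Ici measurableSet_Ioi
    measurableSet_Ioi

lemma exists_grid_params {κ δ : ℝ} (hκ : 0 < κ) (hδ : 0 < δ) :
    ∃ (n : ℕ) (h β γ : ℝ), 0 < n ∧ 0 < h ∧ n * h < 1 ∧ 0 < β ∧ β < κ ∧ κ < γ ∧
      γ < n * h * (κ + δ) ∧ γ < β * (2 - h - n * h) := by
  obtain ⟨n, hn⟩ := exists_nat_gt (2 * (κ + δ) / δ)
  have hnδ : 2 * (κ + δ) < n * δ := (div_lt_iff₀ hδ).1 hn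
  have hn₀ : 0 < n :=
    Nat.cast_pos.1 (pos_of_mul_pos_left (by linarith : (0 : ℝ) < n * δ) hδ.le)
  set h : ℝ := 1 / (n + 2)
  have hh : 0 < h := by positivity
  have hh₁ : h * (n + 2) = 1 := one_div_mul_cancel (by positivity)
  have hnh : (n : ℝ) * h = 1 - 2 * h := by linear_combination hh₁
  have hh3 : h ≤ 1 / 3 := by
    have : (1 : ℝ) ≤ n := by exact_mod_cast hn₀
    exact div_le_div_of_nonneg_left zero_le_one (by norm_num) (by linarith)
  have hgap : κ < n * h * (κ + δ) := by
    rw [hnh]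
    nlinarith
  obtain ⟨t, ht, ht₁, ht₂⟩ : ∃ t, 0 < t ∧ t < n * h * (κ + δ) - κ ∧ t ≤ κ * h / 6 := by
    have hmin := lt_min (sub_pos.2 hgap) (by positivity : 0 < κ * h / 3)
    refine ⟨min (n * h * (κ + δ) - κ) (κ * h / 3) / 2, by linarith, ?_, ?_⟩
    · linarith [min_le_left (n * h * (κ + δ) - κ) (κ * h / 3)]
    · linarith [min_le_right (n * h * (κ + δ) - κ) (κ * h / 3)]
  refine ⟨n, h, κ - t, κ + t, hn₀, hh, by linarith, by nlinarith, by linarith, by linarith,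
    by linarith, ?_⟩
  rw [hnh]
  nlinarith

theorem stmt19_general {Ω : Type*} [MeasureSpace Ω] [IsProbabilityMeasure (ℙ : Measure Ω)]
    (B B' M M' : Ω → ℝ)
    (hBnn : ∀ ω, 0 ≤ B ω) (hB'nn : ∀ ω, 0 ≤ B' ω)
    (hMnn : ∀ ω, 0 ≤ M ω) (hM'nn : ∀ ω, 0 ≤ M' ω)
    (hBB'ind : IndepFun B B')
    (hBB'id : IdentDistrib B' B ℙ ℙ)
    (κ δ : ℝ) (hκ : 0 < κ) (hδ : 0 < δ)
    (hBpos : ∀ x : ℝ, 0 < (ℙ {ω | x < B ω}).toReal)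
    (hBreg : ∀ t > (0 : ℝ),
      Tendsto (fun x => (ℙ {ω | t * x < B ω}).toReal / (ℙ {ω | x < B ω}).toReal)
        atTop (𝓝 (t ^ (-κ))))
    (hind : IndepFun (fun ω => (M ω, M' ω)) (fun ω => (B ω, B' ω)))
    (hMmom : Integrable (fun ω => M ω ^ (κ + δ)))
    (hM'mom : Integrable (fun ω => M' ω ^ (κ + δ))) :
    Tendsto (fun x => (ℙ {ω | x < M ω * B ω ∧ x < M' ω * B' ω}).toReal /
      (ℙ {ω | x < B ω}).toReal) atTop (𝓝 0) := by
  obtain ⟨n, h, β, γ, hn, hh, hnh, hβ, hβκ, hκγ, hγn, hγβ⟩ := exists_grid_params hκ hδ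
  have hκδ : 0 < κ + δ := by linarith
  set F : ℝ → ℝ := fun y => (ℙ {ω | y < B ω}).toReal
  have hF : Antitone F := fun y z hyz => measureReal_mono fun ω hω => lt_of_le_of_lt hyz hω
  have hupper : F =O[atTop] fun x => x ^ (-β) :=
    isBigO_rpow_neg_of_tendsto_div hF hBpos (hBreg 2 two_pos) hβ.le hβκ
  have hlower : (fun x => x ^ (-γ)) =O[atTop] F :=
    rpow_neg_isBigO_of_tendsto_div hF hBpos (hBreg 2 two_pos) (by linarith) hκγ
  have hlarge : ∀ {K : Ω → ℝ}, (∀ ω, 0 ≤ K ω) → Integrable (fun ω => K ω ^ (κ + δ)) →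
      (fun x : ℝ => (ℙ {ω | x ^ (n * h) ≤ max (K ω) 1}).toReal) =o[atTop] F := fun hK hKmom =>
    isLittleO_of_isBigO_rpow_neg (isBigO_measureReal_rpow_le_max_one hK hκδ hKmom _) hlower hγn
  have hgrid : ∀ k ∈ Finset.range n, (fun x : ℝ => (ℙ {ω | x ^ (k * h) ≤ max (M ω) 1}).toReal *
      F (x ^ (1 - (k + 1) * h)) * F (x ^ (1 - n * h))) =o[atTop] F := by
    intro k hk
    have hkn : (k + 1 : ℝ) * h ≤ n * h := by
      gcongr; exact_mod_cast Finset.mem_range.1 hk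
    refine isLittleO_of_isBigO_rpow_neg (isBigO_mul_rpow_neg (isBigO_mul_rpow_neg
      (isBigO_measureReal_rpow_le_max_one hMnn hκδ hMmom _) (isBigO_comp_rpow hupper ?_))
      (isBigO_comp_rpow hupper ?_)) hlower ?_
    · linarith
    · linarith
    · nlinarith [mul_nonneg (mul_nonneg k.cast_nonneg hh.le) (by linarith : 0 ≤ κ + δ - β)]
  refine IsLittleO.tendsto_div_nhds_zero (IsBigO.trans_isLittleO ?_
    (((hlarge hMnn hMmom).add (hlarge hM'nn hM'mom)).add (IsLittleO.fun_sum hgrid)))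
  refine IsBigO.of_bound' ?_
  filter_upwards [eventually_gt_atTop 1] with x hx
  rw [Real.norm_of_nonneg ENNReal.toReal_nonneg]
  exact (measureReal_lt_mul_and_lt_mul_le hBnn hB'nn hBB'ind hBB'id hind hn h hx).trans
    (Real.le_norm_self _)

/-- Asymptotic tail independence of two products: `B, B'` i.i.d. nonnegative with
common regularly varying tail of index `-κ`; multipliers `M, M'` (possibly dependent
on each other) independent of `(B, B')` with finite `(κ+δ)`-moments. Then
`P(M B > x, M' B' > x) = o(P(B > x))` as `x → ∞`. -/
theorem stmt19 {Ω : Type*} [MeasureSpace Ω] [IsProbabilityMeasure (ℙ : Measure Ω)]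
    (B B' M M' : Ω → ℝ)
    (hBmeas : Measurable B) (hB'meas : Measurable B')
    (hMmeas : Measurable M) (hM'meas : Measurable M')
    (hBnn : ∀ ω, 0 ≤ B ω) (hB'nn : ∀ ω, 0 ≤ B' ω)
    (hMnn : ∀ ω, 0 ≤ M ω) (hM'nn : ∀ ω, 0 ≤ M' ω)
    (hBB'ind : IndepFun B B')
    (hBB'id : IdentDistrib B' B ℙ ℙ)
    (κ δ : ℝ) (hκ : 0 < κ) (hδ : 0 < δ)
    (hBpos : ∀ x : ℝ, 0 < (ℙ {ω | x < B ω}).toReal)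
    (hBreg : ∀ t > (0 : ℝ),
      Tendsto (fun x => (ℙ {ω | t * x < B ω}).toReal / (ℙ {ω | x < B ω}).toReal)
        atTop (𝓝 (t ^ (-κ))))
    (hind : IndepFun (fun ω => (M ω, M' ω)) (fun ω => (B ω, B' ω)))
    (hMmom : Integrable (fun ω => M ω ^ (κ + δ)))
    (hM'mom : Integrable (fun ω => M' ω ^ (κ + δ))) :
    Tendsto (fun x => (ℙ {ω | x < M ω * B ω ∧ x < M' ω * B' ω}).toReal /
      (ℙ {ω | x < B ω}).toReal) atTop (𝓝 0) :=
  stmt19_general B B' M M' hBnn hB'nn hMnn hM'nn hBB'ind hBB'id κ δ hκ hδ hBpos hBreg hind hMmom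
    hM'mom
end
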